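/- arXiv:1210.2077 — 5 statements merged into one kernel-verified Lean document; each statement's English description precedes it below -/
import Mathlib

section
/- Let X be an n×p real matrix with n ≥ 1, y ∈ ℝⁿ, β, γ ∈ ℝᵖ, and let η_X ≥ 0, η_ε ≥ 0. Then the supremum of ‖(X − Δ_X)β + Xγ + ε − y‖ over all pairs (Δ_X, ε), where Δ_X is an n×p real matrix with Frobenius norm ‖Δ_X‖_F ≤ η_X and ε ∈ ℝⁿ satisfies (1/n)‖ε‖ ≤ η_ε, equals ‖X(β + γ) − y‖ + η_X ‖β‖ + n·η_ε. -/
/-! Writing the residual as `v + (ε - Δβ)` with `v = X(β + γ) - y`, the perturbation `ε - Δβ`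
ranges over exactly the closed ball of radius `n η_ε + η_X ‖β‖`: the Frobenius norm dominates the
operator norm, and the rank-one matrices `w βᵀ / ‖β‖²` realise every `w` with `‖w‖ ≤ η_X ‖β‖`.
Over a ball of radius `r` about `0`, `‖v + w‖` is at most `‖v‖ + r`, with equality for `w` on the
ray through `v`. -/
open Metric Matrix WithLp
open scoped Matrix.Norms.Frobenius Pointwise

theorem exists_sameRay_norm_eq {E : Type*} [NormedAddCommGroup E] [NormedSpace ℝ E]
    [Nontrivial E] (v : E) {r : ℝ} (hr : 0 ≤ r) : ∃ w : E, ‖w‖ = r ∧ SameRay ℝ v w := by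
  by_cases hv : v = 0
  · obtain ⟨w, hw⟩ := exists_norm_eq E hr
    exact ⟨w, hw, hv ▸ SameRay.zero_left w⟩
  · refine ⟨(r / ‖v‖) • v, ?_, SameRay.sameRay_nonneg_smul_right v (by positivity)⟩
    rw [norm_smul, Real.norm_of_nonneg (by positivity), div_mul_cancel₀ r (norm_ne_zero_iff.2 hv)]

theorem isLUB_image_norm_add_closedBall {E : Type*} [NormedAddCommGroup E] [NormedSpace ℝ E]
    [Nontrivial E] (v : E) {r : ℝ} (hr : 0 ≤ r) :
    IsLUB ((fun w => ‖v + w‖) '' closedBall 0 r) (‖v‖ + r) := by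
  obtain ⟨w, hw, hvw⟩ := exists_sameRay_norm_eq v hr
  refine IsGreatest.isLUB
    ⟨⟨w, mem_closedBall_zero_iff.2 hw.le, hvw.norm_add.trans (by rw [hw])⟩, ?_⟩
  rintro _ ⟨u, hu, rfl⟩
  exact (norm_add_le v u).trans (add_le_add_right (mem_closedBall_zero_iff.1 hu) _)

section Frobenius

variable {m n 𝕜 : Type*} [Fintype m] [Fintype n]

theorem frobenius_norm_eq_sqrt (A : Matrix m n ℝ) : ‖A‖ = √(∑ i, ∑ j, A i j ^ 2) := by
  rw [frobenius_norm_def, Real.sqrt_eq_rpow]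
  simp

theorem norm_toLp_eq_sqrt (x : n → ℝ) : ‖toLp 2 x‖ = √(∑ i, x i ^ 2) := by
  simp [EuclideanSpace.norm_eq]

variable [RCLike 𝕜]

theorem norm_toLp_mulVec_le (A : Matrix m n 𝕜) (x : n → 𝕜) :
    ‖toLp 2 (A *ᵥ x)‖ ≤ ‖A‖ * ‖toLp 2 x‖ := by
  rw [← frobenius_norm_replicateCol (ι := Unit), ← frobenius_norm_replicateCol (ι := Unit),
    replicateCol_mulVec]
  exact frobenius_norm_mul _ _

theorem frobenius_norm_vecMulVec_le (w : m → 𝕜) (x : n → 𝕜) :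
    ‖vecMulVec w x‖ ≤ ‖toLp 2 w‖ * ‖toLp 2 x‖ := by
  rw [vecMulVec_eq Unit, ← frobenius_norm_replicateCol (ι := Unit),
    ← frobenius_norm_replicateRow (ι := Unit)]
  exact frobenius_norm_mul _ _

theorem image_mulVec_frobenius_closedBall (x : n → ℝ) {η : ℝ} (hη : 0 ≤ η) :
    (fun A : Matrix m n ℝ => toLp 2 (A *ᵥ x)) '' closedBall 0 η =
      closedBall 0 (η * ‖toLp 2 x‖) := by
  ext w
  simp only [Set.mem_image, mem_closedBall_zero_iff]
  constructor
  · rintro ⟨A, hA, rfl⟩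
    exact (norm_toLp_mulVec_le A x).trans (by gcongr)
  · intro hw
    by_cases hx : toLp 2 x = 0
    · refine ⟨0, by simpa using hη, ?_⟩
      rw [hx, norm_zero, mul_zero, norm_le_zero_iff] at hw
      simp [hw]
    · have hx' : 0 < ‖toLp 2 x‖ := norm_pos_iff.2 hx
      have hdot : x ⬝ᵥ x = ‖toLp 2 x‖ ^ 2 := by
        rw [EuclideanSpace.real_norm_sq_eq]
        simp [dotProduct, sq]
      refine ⟨(‖toLp 2 x‖ ^ 2)⁻¹ • vecMulVec (ofLp w) x, ?_, ?_⟩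
      · calc ‖(‖toLp 2 x‖ ^ 2)⁻¹ • vecMulVec (ofLp w) x‖
            ≤ (‖toLp 2 x‖ ^ 2)⁻¹ * (‖w‖ * ‖toLp 2 x‖) := by
              rw [norm_smul, Real.norm_of_nonneg (by positivity)]
              gcongr
              exact frobenius_norm_vecMulVec_le _ _
          _ = ‖w‖ / ‖toLp 2 x‖ := by field_simp
          _ ≤ η := (div_le_iff₀ hx').2 hw
      · rw [smul_mulVec, vecMulVec_mulVec, hdot]
        ext i
        simp only [Pi.smul_apply, smul_eq_mul, MulOpposite.smul_eq_mul_unop,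
          MulOpposite.unop_op]
        field_simp

theorem isLUB_norm_add_sub_mulVec [Nonempty m] (v : m → ℝ) (x : n → ℝ) {η ρ : ℝ}
    (hη : 0 ≤ η) (hρ : 0 ≤ ρ) :
    IsLUB {r | ∃ (A : Matrix m n ℝ) (ε : m → ℝ),
        ‖A‖ ≤ η ∧ ‖toLp 2 ε‖ ≤ ρ ∧ r = ‖toLp 2 (v + ε - A *ᵥ x)‖}
      (‖toLp 2 v‖ + η * ‖toLp 2 x‖ + ρ) := by
  have hball : closedBall (0 : EuclideanSpace ℝ m) (ρ + η * ‖toLp 2 x‖) =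
      closedBall 0 ρ - (fun A : Matrix m n ℝ => toLp 2 (A *ᵥ x)) '' closedBall 0 η := by
    rw [image_mulVec_frobenius_closedBall x hη,
      closedBall_sub_closedBall hρ (by positivity), sub_zero]
  rw [add_assoc, add_comm (η * _)]
  convert isLUB_image_norm_add_closedBall (toLp 2 v) (r := ρ + η * ‖toLp 2 x‖) (by positivity)
    using 1
  rw [hball]
  ext r
  simp only [toLp_sub, toLp_add, add_sub_assoc]
  constructor
  · rintro ⟨A, ε, hA, hε, rfl⟩
    exact ⟨_, Set.sub_mem_sub (mem_closedBall_zero_iff.2 hε)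
      ⟨A, mem_closedBall_zero_iff.2 hA, rfl⟩, rfl⟩
  · rintro ⟨_, ⟨e, he, _, ⟨A, hA, rfl⟩, rfl⟩, rfl⟩
    exact ⟨A, ofLp e, mem_closedBall_zero_iff.1 hA, mem_closedBall_zero_iff.1 he, rfl⟩

end Frobenius

/-- For `n ≥ 1`, the supremum of `‖(X − Δ_X)β + Xγ + ε − y‖` over all
pairs `(Δ_X, ε)` with `‖Δ_X‖_F ≤ η_X` and `(1/n)‖ε‖ ≤ η_ε` equals
`‖X(β + γ) − y‖ + η_X‖β‖ + n·η_ε`. -/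
theorem robust_objective_supremum (n p : ℕ) (hn : 1 ≤ n)
    (X : Matrix (Fin n) (Fin p) ℝ) (y : Fin n → ℝ) (β γ : Fin p → ℝ)
    (ηX ηε : ℝ) (hηX : 0 ≤ ηX) (hηε : 0 ≤ ηε) :
    IsLUB {r : ℝ | ∃ (ΔX : Matrix (Fin n) (Fin p) ℝ) (ε : Fin n → ℝ),
        Real.sqrt (∑ i, ∑ j, ΔX i j ^ 2) ≤ ηX ∧
        (1 / (n : ℝ)) * Real.sqrt (∑ i, ε i ^ 2) ≤ ηε ∧
        r = Real.sqrt (∑ i, ((X - ΔX).mulVec β i + X.mulVec γ i + ε i - y i) ^ 2)}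
      (Real.sqrt (∑ i, (X.mulVec (β + γ) i - y i) ^ 2)
        + ηX * Real.sqrt (∑ j, β j ^ 2) + n * ηε) := by
  have hn' : (0 : ℝ) < n := by exact_mod_cast hn
  have : NeZero n := ⟨by omega⟩
  have hresidual (ΔX : Matrix (Fin n) (Fin p) ℝ) (ε : Fin n → ℝ) (i : Fin n) :
      ((X - ΔX) *ᵥ β) i + (X *ᵥ γ) i + ε i - y i = (X *ᵥ (β + γ) - y + ε - ΔX *ᵥ β) i := by
    simp only [sub_mulVec, mulVec_add, Pi.add_apply, Pi.sub_apply]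
    ring
  convert isLUB_norm_add_sub_mulVec (X *ᵥ (β + γ) - y) β hηX (by positivity : 0 ≤ n * ηε)
    using 1
  · ext r
    refine exists_congr fun ΔX => exists_congr fun ε => ?_
    rw [frobenius_norm_eq_sqrt, norm_toLp_eq_sqrt, norm_toLp_eq_sqrt, one_div,
      inv_mul_le_iff₀ hn']
    simp only [hresidual]
  · simp only [norm_toLp_eq_sqrt, Pi.sub_apply]
end

section
/- Let X be an n×p real matrix, y ∈ ℝⁿ, λ > 0 and η_γ > 0. Then for every β ∈ ℝᵖ, max over γ ∈ ℝᵖ with ‖γ‖_∞ ≤ η_γ of [‖Xβ − y‖² + λ‖β − γ‖²] equals ‖Xβ − y‖² + 2λη_γ‖β‖₁ + λ‖β‖² + λpη_γ². Consequently, β minimizes the function β ↦ max_{‖γ‖_∞ ≤ η_γ} [‖Xβ − y‖² + λ‖β − γ‖²] over ℝᵖ if and only if β minimizes the elastic-net objective β ↦ ‖Xβ − y‖² + 2λη_γ‖β‖₁ + λ‖β‖² over ℝᵖ. -/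
open scoped BigOperators

lemma greatest_aux (n p : ℕ) (X : Matrix (Fin n) (Fin p) ℝ)
    (y : Fin n → ℝ) (lam ηγ : ℝ) (hlam : 0 < lam) (hηγ : 0 < ηγ) (β : Fin p → ℝ) :
    IsGreatest {r : ℝ | ∃ γ : Fin p → ℝ, (⨆ j, |γ j|) ≤ ηγ ∧
        r = (∑ i, (X.mulVec β i - y i) ^ 2) + lam * ∑ j, (β j - γ j) ^ 2}
      ((∑ i, (X.mulVec β i - y i) ^ 2) + 2 * lam * ηγ * (∑ j, |β j|)
        + lam * (∑ j, β j ^ 2) + lam * p * ηγ ^ 2) := by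
  constructor
  · refine ⟨fun j => if 0 ≤ β j then -ηγ else ηγ, ?_, ?_⟩
    · refine Real.iSup_le (fun j => ?_) hηγ.le
      by_cases h : 0 ≤ β j <;> simp [h, abs_of_pos hηγ]
    · have hsum : ∀ j, (β j - (if 0 ≤ β j then -ηγ else ηγ)) ^ 2
          = β j ^ 2 + 2 * ηγ * |β j| + ηγ ^ 2 := by
        intro j
        by_cases h : 0 ≤ β j
        · simp only [h, if_pos, abs_of_nonneg h]; ring
        · simp only [h, if_neg, not_false_iff, abs_of_neg (lt_of_not_ge h)]; ring
      have hs : ∑ j, (β j - (if 0 ≤ β j then -ηγ else ηγ)) ^ 2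
          = (∑ j, β j ^ 2) + 2 * ηγ * (∑ j, |β j|) + p * ηγ ^ 2 := by
        simp [hsum, Finset.sum_add_distrib, Finset.mul_sum, Finset.card_univ]
      rw [hs]; ring
  · rintro r ⟨γ, hγ, rfl⟩
    have hj : ∀ j, |γ j| ≤ ηγ := by
      intro j
      exact le_trans (le_ciSup (f := fun j => |γ j|) (Set.Finite.bddAbove (Set.finite_range _)) j) hγ
    have key : ∀ j, (β j - γ j) ^ 2 ≤ β j ^ 2 + 2 * ηγ * |β j| + ηγ ^ 2 := by
      intro j
      have h1 : |β j - γ j| ≤ |β j| + ηγ :=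
        le_trans (abs_sub _ _) (by linarith [hj j])
      calc (β j - γ j) ^ 2 = |β j - γ j| ^ 2 := (sq_abs _).symm
        _ ≤ (|β j| + ηγ) ^ 2 := by
            apply pow_le_pow_left₀ (abs_nonneg _) h1
        _ = β j ^ 2 + 2 * ηγ * |β j| + ηγ ^ 2 := by
            rw [← sq_abs (β j)]; ring
    have hS : ∑ j, (β j - γ j) ^ 2 ≤ ∑ j, (β j ^ 2 + 2 * ηγ * |β j| + ηγ ^ 2) :=
      Finset.sum_le_sum fun j _ => key j
    have hS2 : ∑ j, (β j ^ 2 + 2 * ηγ * |β j| + ηγ ^ 2)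
        = (∑ j, β j ^ 2) + 2 * ηγ * (∑ j, |β j|) + p * ηγ ^ 2 := by
      simp [Finset.sum_add_distrib, Finset.mul_sum, Finset.card_univ]
    nlinarith [mul_le_mul_of_nonneg_left hS hlam.le]

/-- For `λ > 0` and `η_γ > 0`, the max over `‖γ‖_∞ ≤ η_γ` of
`‖Xβ − y‖² + λ‖β − γ‖²` equals
`‖Xβ − y‖² + 2λη_γ‖β‖₁ + λ‖β‖² + λpη_γ²`.  Consequently `β₀` minimizes the
worst-case objective iff it minimizes the elastic-net objective
`‖Xβ − y‖² + 2λη_γ‖β‖₁ + λ‖β‖²`. -/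
theorem worst_case_equals_elastic_net (n p : ℕ) (X : Matrix (Fin n) (Fin p) ℝ)
    (y : Fin n → ℝ) (lam ηγ : ℝ) (hlam : 0 < lam) (hηγ : 0 < ηγ) :
    (∀ β : Fin p → ℝ,
      IsGreatest {r : ℝ | ∃ γ : Fin p → ℝ, (⨆ j, |γ j|) ≤ ηγ ∧
          r = (∑ i, (X.mulVec β i - y i) ^ 2) + lam * ∑ j, (β j - γ j) ^ 2}
        ((∑ i, (X.mulVec β i - y i) ^ 2) + 2 * lam * ηγ * (∑ j, |β j|)
          + lam * (∑ j, β j ^ 2) + lam * p * ηγ ^ 2)) ∧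
    (∀ β₀ : Fin p → ℝ,
      (∀ β : Fin p → ℝ,
        sSup {r : ℝ | ∃ γ : Fin p → ℝ, (⨆ j, |γ j|) ≤ ηγ ∧
              r = (∑ i, (X.mulVec β₀ i - y i) ^ 2) + lam * ∑ j, (β₀ j - γ j) ^ 2}
          ≤ sSup {r : ℝ | ∃ γ : Fin p → ℝ, (⨆ j, |γ j|) ≤ ηγ ∧
              r = (∑ i, (X.mulVec β i - y i) ^ 2) + lam * ∑ j, (β j - γ j) ^ 2})
      ↔ (∀ β : Fin p → ℝ,
          (∑ i, (X.mulVec β₀ i - y i) ^ 2) + 2 * lam * ηγ * (∑ j, |β₀ j|)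
              + lam * (∑ j, β₀ j ^ 2)
            ≤ (∑ i, (X.mulVec β i - y i) ^ 2) + 2 * lam * ηγ * (∑ j, |β j|)
              + lam * (∑ j, β j ^ 2))) := by
  have hG := greatest_aux n p X y lam ηγ hlam hηγ
  refine ⟨hG, fun β₀ => ?_⟩
  have hsup : ∀ β : Fin p → ℝ,
      sSup {r : ℝ | ∃ γ : Fin p → ℝ, (⨆ j, |γ j|) ≤ ηγ ∧
          r = (∑ i, (X.mulVec β i - y i) ^ 2) + lam * ∑ j, (β j - γ j) ^ 2}
        = (∑ i, (X.mulVec β i - y i) ^ 2) + 2 * lam * ηγ * (∑ j, |β j|)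
          + lam * (∑ j, β j ^ 2) + lam * p * ηγ ^ 2 :=
    fun β => (hG β).csSup_eq
  constructor
  · intro h β
    have := h β
    rw [hsup, hsup] at this
    linarith
  · intro h β
    rw [hsup, hsup]
    linarith [h β]
end

section
/- For every β ∈ ℝᵖ with p ≥ 1 and every η ≥ 0, the supremum of ‖β − γ‖² over all γ ∈ ℝᵖ with ‖γ‖₁ ≤ η equals ‖β‖² + 2η‖β‖_∞ + η². Consequently, for any n×p real matrix X, y ∈ ℝⁿ and λ > 0, for every β ∈ ℝᵖ, max over γ with ‖γ‖₁ ≤ η of [‖Xβ − y‖² + λ‖β − γ‖²] equals ‖Xβ − y‖² + 2λη‖β‖_∞ + λ‖β‖² + λη². -/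
open scoped BigOperators

lemma key_isGreatest (p : ℕ) (hp : 1 ≤ p) (η : ℝ) (hη : 0 ≤ η) (β : Fin p → ℝ) :
    IsGreatest {r : ℝ | ∃ γ : Fin p → ℝ, (∑ j, |γ j|) ≤ η ∧
        r = ∑ j, (β j - γ j) ^ 2}
      ((∑ j, β j ^ 2) + 2 * η * (⨆ j, |β j|) + η ^ 2) := by
  haveI : Nonempty (Fin p) := Fin.pos_iff_nonempty.mp hp
  obtain ⟨j0, hj0⟩ := Finite.exists_max (fun j => |β j|)
  have hbdd : BddAbove (Set.range fun j => |β j|) :=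
    Set.Finite.bddAbove (Set.finite_range _)
  have hM : (⨆ j, |β j|) = |β j0| :=
    le_antisymm (ciSup_le hj0) (le_ciSup hbdd j0)
  constructor
  · -- membership: take γ supported on j0
    set s : ℝ := if 0 ≤ β j0 then -η else η with hs
    refine ⟨fun j => if j = j0 then s else 0, ?_, ?_⟩
    · have : (∑ j, |if j = j0 then s else 0|) = |s| := by
        rw [Finset.sum_congr rfl (fun j _ => apply_ite abs (j = j0) s 0)]
        simp [Finset.sum_ite_eq']
      rw [this]
      have : |s| = η := by
        rcases le_or_gt 0 (β j0) with h | h <;> simp [hs, h, abs_of_nonneg hη, not_le.mpr]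
      rw [this]
    · have expand : ∀ j, (β j - (if j = j0 then s else 0)) ^ 2
          = β j ^ 2 + ((if j = j0 then s else 0) ^ 2
            - 2 * β j * (if j = j0 then s else 0)) := by
        intro j; ring
      rw [Finset.sum_congr rfl (fun j _ => expand j), Finset.sum_add_distrib]
      have hsingle : (∑ j, ((if j = j0 then s else 0) ^ 2
            - 2 * β j * (if j = j0 then s else 0)))
          = s ^ 2 - 2 * β j0 * s := by
        rw [Finset.sum_eq_single j0]
        · simp
        · intro b _ hb; simp [hb]
        · simp
      rw [hsingle, hM]
      have : s ^ 2 - 2 * β j0 * s = 2 * η * |β j0| + η ^ 2 := by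
        rcases le_or_gt 0 (β j0) with h | h
        · rw [abs_of_nonneg h]; simp only [hs, if_pos h]; ring
        · rw [abs_of_neg h]; simp only [hs, if_neg (not_le.mpr h)]; ring
      rw [this]; ring
  · -- upper bound
    rintro r ⟨γ, hγ, rfl⟩
    have hMnn : (0:ℝ) ≤ ⨆ j, |β j| := by rw [hM]; exact abs_nonneg _
    have expand : (∑ j, (β j - γ j) ^ 2)
        = (∑ j, β j ^ 2) + (∑ j, (-(2 * β j * γ j))) + (∑ j, γ j ^ 2) := by
      rw [← Finset.sum_add_distrib, ← Finset.sum_add_distrib]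
      exact Finset.sum_congr rfl (fun j _ => by ring)
    rw [expand]
    have h1 : (∑ j, (-(2 * β j * γ j))) ≤ 2 * η * (⨆ j, |β j|) := by
      calc (∑ j, (-(2 * β j * γ j))) ≤ ∑ j, 2 * (⨆ k, |β k|) * |γ j| := by
            apply Finset.sum_le_sum
            intro j _
            have h2 : -(2 * β j * γ j) ≤ 2 * (|β j| * |γ j|) := by
              have := neg_abs_le (2 * β j * γ j)
              calc -(2 * β j * γ j) ≤ |2 * β j * γ j| := neg_le_abs _
                _ = 2 * (|β j| * |γ j|) := by rw [abs_mul, abs_mul]; simp [abs_of_nonneg]; ring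
            refine h2.trans ?_
            have hb : |β j| ≤ ⨆ k, |β k| := le_ciSup hbdd j
            have := mul_le_mul_of_nonneg_right hb (abs_nonneg (γ j))
            nlinarith
        _ = 2 * (⨆ k, |β k|) * (∑ j, |γ j|) := by rw [Finset.mul_sum]
        _ ≤ 2 * (⨆ k, |β k|) * η := by
            apply mul_le_mul_of_nonneg_left hγ; positivity
        _ = 2 * η * (⨆ j, |β j|) := by ring
    have h2 : (∑ j, γ j ^ 2) ≤ η ^ 2 := by
      have step : (∑ j, γ j ^ 2) ≤ (∑ j, |γ j|) ^ 2 := by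
        calc (∑ j, γ j ^ 2) = ∑ j, |γ j| * |γ j| := by
              refine Finset.sum_congr rfl (fun j _ => ?_)
              rw [← sq_abs, sq]
          _ ≤ ∑ j, |γ j| * (∑ k, |γ k|) := by
              apply Finset.sum_le_sum
              intro j _
              apply mul_le_mul_of_nonneg_left _ (abs_nonneg _)
              exact Finset.single_le_sum (fun k _ => abs_nonneg (γ k)) (Finset.mem_univ j)
          _ = (∑ j, |γ j|) ^ 2 := by rw [← Finset.sum_mul]; ring
      refine step.trans ?_
      have : (0:ℝ) ≤ ∑ j, |γ j| := Finset.sum_nonneg (fun j _ => abs_nonneg _)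
      nlinarith
    linarith

/-- For `p ≥ 1` and `η ≥ 0`, the supremum of `‖β − γ‖²` over
`‖γ‖₁ ≤ η` equals `‖β‖² + 2η‖β‖_∞ + η²`.  Consequently, for any `X`, `y` and
`λ > 0`, the max over `‖γ‖₁ ≤ η` of `‖Xβ − y‖² + λ‖β − γ‖²` equals
`‖Xβ − y‖² + 2λη‖β‖_∞ + λ‖β‖² + λη²`. -/
theorem worst_case_l1_ball (n p : ℕ) (hp : 1 ≤ p) (η : ℝ) (hη : 0 ≤ η)
    (X : Matrix (Fin n) (Fin p) ℝ) (y : Fin n → ℝ) (lam : ℝ) (hlam : 0 < lam) :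
    (∀ β : Fin p → ℝ,
      IsLUB {r : ℝ | ∃ γ : Fin p → ℝ, (∑ j, |γ j|) ≤ η ∧
          r = ∑ j, (β j - γ j) ^ 2}
        ((∑ j, β j ^ 2) + 2 * η * (⨆ j, |β j|) + η ^ 2)) ∧
    (∀ β : Fin p → ℝ,
      IsGreatest {r : ℝ | ∃ γ : Fin p → ℝ, (∑ j, |γ j|) ≤ η ∧
          r = (∑ i, (X.mulVec β i - y i) ^ 2) + lam * ∑ j, (β j - γ j) ^ 2}
        ((∑ i, (X.mulVec β i - y i) ^ 2) + 2 * lam * η * (⨆ j, |β j|)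
          + lam * (∑ j, β j ^ 2) + lam * η ^ 2)) := by
  constructor
  · intro β
    exact (key_isGreatest p hp η hη β).isLUB
  · intro β
    obtain ⟨⟨γ, hγ, hval⟩, hub⟩ := key_isGreatest p hp η hη β
    constructor
    · refine ⟨γ, hγ, ?_⟩
      rw [← hval]; ring
    · rintro r ⟨γ', hγ', rfl⟩
      have := hub ⟨γ', hγ', rfl⟩
      nlinarith [this]
end

section
/- Let G₁, …, G_K be a partition of {1, …, p} into nonempty disjoint groups and let η ≥ 0. Then the supremum of ‖β − γ‖² over all γ ∈ ℝᵖ such that ‖γ_{G_k}‖₁ ≤ η for every k = 1, …, K equals ‖β‖² + 2η Σ_{k=1}^K ‖β_{G_k}‖_∞ + K·η². -/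
open scoped BigOperators

/-- Let `G₁, …, G_K` partition `{1, …, p}` into nonempty disjoint
groups and `η ≥ 0`.  The supremum of `‖β − γ‖²` over `γ` with `‖γ_{G_k}‖₁ ≤ η`
for every `k` equals `‖β‖² + 2η Σₖ ‖β_{G_k}‖_∞ + K·η²`. -/
theorem worst_case_groupwise_l1 (p K : ℕ) (G : Fin K → Finset (Fin p))
    (hne : ∀ k, (G k).Nonempty)
    (hdisj : ∀ k l, k ≠ l → Disjoint (G k) (G l))
    (hcov : ∀ j, ∃ k, j ∈ G k)
    (η : ℝ) (hη : 0 ≤ η) (β : Fin p → ℝ) :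
    IsLUB {r : ℝ | ∃ γ : Fin p → ℝ, (∀ k, (∑ j ∈ G k, |γ j|) ≤ η) ∧
        r = ∑ j, (β j - γ j) ^ 2}
      ((∑ j, β j ^ 2) + 2 * η * (∑ k, (G k).sup' (hne k) fun j => |β j|)
        + K * η ^ 2) := by
  classical
  have huniv : (Finset.univ.biUnion G) = Finset.univ := by
    apply Finset.eq_univ_iff_forall.mpr
    intro j
    rcases hcov j with ⟨k, hk⟩
    exact Finset.mem_biUnion.mpr ⟨k, Finset.mem_univ k, hk⟩
  have hpart : ∀ f : Fin p → ℝ, ∑ j, f j = ∑ k, ∑ j ∈ G k, f j := by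
    intro f
    rw [← huniv, Finset.sum_biUnion]
    intro k _ l _ h
    exact hdisj k l h
  -- Upper bound
  have hub : ∀ γ : Fin p → ℝ, (∀ k, (∑ j ∈ G k, |γ j|) ≤ η) →
      ∑ j, (β j - γ j) ^ 2 ≤
        (∑ j, β j ^ 2) + 2 * η * (∑ k, (G k).sup' (hne k) fun j => |β j|)
          + K * η ^ 2 := by
    intro γ hγ
    have key : ∀ k, ∑ j ∈ G k, (β j - γ j) ^ 2 ≤
        (∑ j ∈ G k, β j ^ 2) + 2 * η * ((G k).sup' (hne k) fun j => |β j|)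
          + η ^ 2 := by
      intro k
      set M := (G k).sup' (hne k) fun j => |β j| with hMdef
      obtain ⟨j0, hj0⟩ := hne k
      have hM0 : 0 ≤ M := by
        rw [hMdef]
        exact le_trans (abs_nonneg (β j0)) (Finset.le_sup' (fun j => |β j|) hj0)
      have h1 : ∑ j ∈ G k, (β j - γ j) ^ 2 =
          (∑ j ∈ G k, β j ^ 2) + (∑ j ∈ G k, (-2 * (β j * γ j)))
            + ∑ j ∈ G k, γ j ^ 2 := by
        rw [← Finset.sum_add_distrib, ← Finset.sum_add_distrib]
        exact Finset.sum_congr rfl fun j _ => by ring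
      have h2 : ∑ j ∈ G k, (-2 * (β j * γ j)) ≤ 2 * η * M := by
        calc ∑ j ∈ G k, (-2 * (β j * γ j)) ≤ ∑ j ∈ G k, 2 * (M * |γ j|) := by
              apply Finset.sum_le_sum
              intro j hj
              have hb : |β j| ≤ M := hMdef ▸ Finset.le_sup' (fun j => |β j|) hj
              have hn : -(β j * γ j) ≤ |β j * γ j| := neg_le_abs _
              have habs : |β j * γ j| = |β j| * |γ j| := abs_mul _ _
              have hmm : |β j| * |γ j| ≤ M * |γ j| :=
                mul_le_mul_of_nonneg_right hb (abs_nonneg _)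
              nlinarith
          _ = 2 * M * ∑ j ∈ G k, |γ j| := by
              rw [Finset.mul_sum]; exact Finset.sum_congr rfl fun j _ => by ring
          _ ≤ 2 * M * η := by
              apply mul_le_mul_of_nonneg_left (hγ k); positivity
          _ = 2 * η * M := by ring
      have h3 : ∑ j ∈ G k, γ j ^ 2 ≤ η ^ 2 := by
        have hs0 : 0 ≤ ∑ j ∈ G k, |γ j| :=
          Finset.sum_nonneg fun j _ => abs_nonneg _
        calc ∑ j ∈ G k, γ j ^ 2
            ≤ ∑ j ∈ G k, |γ j| * (∑ i ∈ G k, |γ i|) := by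
              apply Finset.sum_le_sum
              intro j hj
              have hle : |γ j| ≤ ∑ i ∈ G k, |γ i| :=
                Finset.single_le_sum (fun i _ => abs_nonneg (γ i)) hj
              have : γ j ^ 2 = |γ j| * |γ j| := by
                rw [← sq_abs, sq]
              rw [this]
              exact mul_le_mul_of_nonneg_left hle (abs_nonneg _)
          _ = (∑ j ∈ G k, |γ j|) * (∑ i ∈ G k, |γ i|) := by
              rw [← Finset.sum_mul]
          _ ≤ η * η := mul_le_mul (hγ k) (hγ k) hs0 hη
          _ = η ^ 2 := by ring
      linarith
    calc ∑ j, (β j - γ j) ^ 2 = ∑ k, ∑ j ∈ G k, (β j - γ j) ^ 2 := hpart _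
      _ ≤ ∑ k, ((∑ j ∈ G k, β j ^ 2)
            + 2 * η * ((G k).sup' (hne k) fun j => |β j|) + η ^ 2) :=
          Finset.sum_le_sum fun k _ => key k
      _ = (∑ j, β j ^ 2) + 2 * η * (∑ k, (G k).sup' (hne k) fun j => |β j|)
            + K * η ^ 2 := by
          rw [Finset.sum_add_distrib, Finset.sum_add_distrib, hpart fun j => β j ^ 2,
            ← Finset.mul_sum, Finset.sum_const, Finset.card_univ, Fintype.card_fin,
            nsmul_eq_mul]
  -- Attaining γ
  have hjkex : ∀ k, ∃ j ∈ G k, ((G k).sup' (hne k) fun j => |β j|) = |β j| :=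
    fun k => Finset.exists_mem_eq_sup' (hne k) _
  choose jk hjk1 hjk2 using hjkex
  have hinj : Function.Injective jk := by
    intro k l h
    by_contra hkl
    exact (Finset.disjoint_left.mp (hdisj k l hkl)) (hjk1 k)
      (by rw [h]; exact hjk1 l)
  set γ : Fin p → ℝ := fun j =>
    if ∃ k, jk k = j then (if 0 ≤ β j then -η else η) else 0 with hγdef
  have hγsum : ∀ k, ∑ j ∈ G k, |γ j| = η := by
    intro k
    have hstep : ∀ j ∈ G k, |γ j| = if j = jk k then η else 0 := by
      intro j hj
      by_cases hjj : j = jk k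
      · subst hjj
        rw [if_pos rfl]
        simp only [hγdef]
        rw [if_pos ⟨k, rfl⟩]
        split_ifs
        · rw [abs_neg, abs_of_nonneg hη]
        · exact abs_of_nonneg hη
      · rw [if_neg hjj]
        simp only [hγdef]
        rw [if_neg, abs_zero]
        rintro ⟨l, rfl⟩
        by_cases hlk : l = k
        · exact hjj (by rw [hlk])
        · exact (Finset.disjoint_left.mp (hdisj l k hlk)) (hjk1 l) hj
    rw [Finset.sum_congr rfl hstep, Finset.sum_ite_eq' (G k) (jk k) fun _ => η,
      if_pos (hjk1 k)]
  have hch : ∀ j, (β j - γ j) ^ 2 =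
      β j ^ 2 + (if ∃ k, jk k = j then 2 * η * |β j| + η ^ 2 else 0) := by
    intro j
    simp only [hγdef]
    split_ifs with h1 h2
    · rw [abs_of_nonneg h2]; ring
    · rw [abs_of_neg (lt_of_not_ge h2)]; ring
    · ring
  have hval : ∑ j, (β j - γ j) ^ 2 =
      (∑ j, β j ^ 2) + 2 * η * (∑ k, (G k).sup' (hne k) fun j => |β j|)
        + K * η ^ 2 := by
    have himg : Finset.univ.filter (fun j => ∃ k, jk k = j)
        = Finset.univ.image jk := by
      ext j
      simp [Finset.mem_filter, Finset.mem_image, eq_comm]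
    calc ∑ j, (β j - γ j) ^ 2
        = ∑ j, (β j ^ 2 + if ∃ k, jk k = j then 2 * η * |β j| + η ^ 2 else 0) :=
          Finset.sum_congr rfl fun j _ => hch j
      _ = (∑ j, β j ^ 2)
            + ∑ j, (if ∃ k, jk k = j then 2 * η * |β j| + η ^ 2 else 0) :=
          Finset.sum_add_distrib
      _ = (∑ j, β j ^ 2)
            + ∑ j ∈ Finset.univ.image jk, (2 * η * |β j| + η ^ 2) := by
          rw [← Finset.sum_filter, himg]
      _ = (∑ j, β j ^ 2) + ∑ k, (2 * η * |β (jk k)| + η ^ 2) := by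
          rw [Finset.sum_image fun k _ l _ h => hinj h]
      _ = (∑ j, β j ^ 2)
            + ∑ k, (2 * η * ((G k).sup' (hne k) fun j => |β j|) + η ^ 2) := by
          congr 1
          exact Finset.sum_congr rfl fun k _ => by rw [hjk2 k]
      _ = (∑ j, β j ^ 2) + 2 * η * (∑ k, (G k).sup' (hne k) fun j => |β j|)
            + K * η ^ 2 := by
          rw [Finset.sum_add_distrib, ← Finset.mul_sum, Finset.sum_const,
            Finset.card_univ, Fintype.card_fin, nsmul_eq_mul]
          ring
  constructor
  · rintro r ⟨γ', hγ', rfl⟩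
    exact hub γ' hγ'
  · intro b hb
    exact hval ▸ hb ⟨γ, fun k => le_of_eq (hγsum k), hval.symm ▸ rfl⟩
end

section
/- Let X be an n×p real matrix, y ∈ ℝⁿ, λ > 0. Define J_λ(β, γ) = ‖Xβ − y‖² + λ‖β − γ‖². Let N be any norm on ℝᵖ, η_γ > 0, and D_γ = {γ ∈ ℝᵖ : N(γ) ≤ η_γ}. Then for every γ ∈ ℝᵖ with N(γ) ≥ η_γ and every β₀ ∈ ℝᵖ minimizing β ↦ J_λ(β, γ): inf over β ∈ ℝᵖ of sup over γ' ∈ D_γ of J_λ(β, γ') ≥ (η_γ/N(γ))·J_λ(β₀, γ) − λη_γ(N(γ) − η_γ)·‖γ‖²/N(γ)². -/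
/-!
Put `t = η_γ / N(γ) ∈ (0, 1]`, so that `t • γ ∈ D_γ`. Since `β - tγ = t(β - γ) + (1 - t)β`,
for every `β`
`J_λ(β, tγ) ≥ t J_λ(β, γ) - λ t(1 - t)‖γ‖² ≥ t J_λ(β₀, γ) - λ t(1 - t)‖γ‖²`,
and the right-hand side is the claimed bound. The supremum over `D_γ` is a genuine one (not the
junk value `sSup` takes on unbounded sets) because `D_γ` is compact: on a finite-dimensional
space the norm `N` dominates a multiple of any other norm.
-/

open scoped BigOperators

/-- The objective `J_λ(β, γ) = ‖Xβ − y‖² + λ‖β − γ‖²`. -/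
noncomputable def Jobj (n p : ℕ) (X : Matrix (Fin n) (Fin p) ℝ) (y : Fin n → ℝ)
    (lam : ℝ) (β γ : Fin p → ℝ) : ℝ :=
  (∑ i, (X.mulVec β i - y i) ^ 2) + lam * ∑ j, (β j - γ j) ^ 2

namespace Seminorm

variable {E : Type*} [NormedAddCommGroup E] [NormedSpace ℝ E] [FiniteDimensional ℝ E]

theorem continuous_of_finiteDimensional (q : Seminorm ℝ E) : Continuous q :=
  q.convexOn.locallyLipschitz.continuous

theorem exists_pos_mul_norm_le (q : Seminorm ℝ E) (hq : ∀ x, q x = 0 → x = 0) :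
    ∃ c > 0, ∀ x, c * ‖x‖ ≤ q x := by
  rcases subsingleton_or_nontrivial E with hE | hE
  · exact ⟨1, one_pos, fun x => by simp [Subsingleton.elim x 0]⟩
  obtain ⟨x₀, hx₀, hmin⟩ := (isCompact_sphere (0 : E) 1).exists_isMinOn
    (NormedSpace.sphere_nonempty.mpr zero_le_one) q.continuous_of_finiteDimensional.continuousOn
  rw [mem_sphere_zero_iff_norm] at hx₀
  refine ⟨q x₀, (apply_nonneg q x₀).lt_of_ne' fun h => by simp [hq x₀ h] at hx₀, fun x => ?_⟩
  rcases eq_or_ne x 0 with rfl | hx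
  · simp
  have hx' : 0 < ‖x‖ := norm_pos_iff.mpr hx
  have h : q x₀ ≤ q (‖x‖⁻¹ • x) := hmin (by simp [norm_smul, hx'.ne'])
  rw [map_smul_eq_mul, norm_inv, norm_norm] at h
  rwa [le_inv_mul_iff₀ hx', mul_comm] at h

theorem isCompact_closedBall_zero (q : Seminorm ℝ E) (hq : ∀ x, q x = 0 → x = 0) (r : ℝ) :
    IsCompact (q.closedBall 0 r) := by
  obtain ⟨c, hc, hcq⟩ := q.exists_pos_mul_norm_le hq
  refine Metric.isCompact_of_isClosed_isBounded ?_
    ((Metric.isBounded_closedBall (x := (0 : E)) (r := r / c)).subset fun x hx => ?_)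
  · rw [closedBall_zero_eq]
    exact isClosed_le q.continuous_of_finiteDimensional continuous_const
  · rw [mem_closedBall_zero] at hx
    rw [mem_closedBall_zero_iff, le_div_iff₀ hc, mul_comm]
    exact (hcq x).trans hx

end Seminorm

theorem sum_sub_mul_sq {ι : Type*} [Fintype ι] (β γ : ι → ℝ) (t : ℝ) :
    ∑ j, (β j - t * γ j) ^ 2 =
      t * ∑ j, (β j - γ j) ^ 2 + (1 - t) * ∑ j, β j ^ 2 - t * (1 - t) * ∑ j, γ j ^ 2 := by
  simp only [Finset.mul_sum, ← Finset.sum_add_distrib, ← Finset.sum_sub_distrib]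
  exact Finset.sum_congr rfl fun j _ => by ring

section Jobj

variable {n p : ℕ} (X : Matrix (Fin n) (Fin p) ℝ) (y : Fin n → ℝ)

theorem continuous_Jobj_right (lam : ℝ) (β : Fin p → ℝ) : Continuous (Jobj n p X y lam β) := by
  unfold Jobj
  fun_prop

theorem mul_Jobj_sub_le_Jobj_smul {lam : ℝ} (hlam : 0 ≤ lam) {t : ℝ} (ht : t ≤ 1)
    (β γ : Fin p → ℝ) :
    t * Jobj n p X y lam β γ - lam * t * (1 - t) * ∑ j, γ j ^ 2 ≤ Jobj n p X y lam β (t • γ) := by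
  have hfit : 0 ≤ ∑ i, (X.mulVec β i - y i) ^ 2 := by positivity
  have hβ : 0 ≤ ∑ j, β j ^ 2 := by positivity
  simp only [Jobj, Pi.smul_apply, smul_eq_mul, sum_sub_mul_sq]
  nlinarith [mul_nonneg (sub_nonneg.mpr ht) hfit,
    mul_nonneg hlam (mul_nonneg (sub_nonneg.mpr ht) hβ)]

end Jobj

theorem optimality_gap_bound_general (n p : ℕ) (X : Matrix (Fin n) (Fin p) ℝ)
    (y : Fin n → ℝ) (lam : ℝ) (hlam : 0 < lam)
    (N : (Fin p → ℝ) → ℝ)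
    (hN_eq_zero : ∀ x, N x = 0 ↔ x = 0)
    (hN_smul : ∀ (c : ℝ) (x : Fin p → ℝ), N (c • x) = |c| * N x)
    (hN_add : ∀ x z : Fin p → ℝ, N (x + z) ≤ N x + N z)
    (ηγ : ℝ) (hηγ : 0 < ηγ)
    (γ : Fin p → ℝ) (hγ : ηγ ≤ N γ)
    (β₀ : Fin p → ℝ) (hβ₀ : ∀ β, Jobj n p X y lam β₀ γ ≤ Jobj n p X y lam β γ) :
    (⨅ β : Fin p → ℝ,
        sSup {r : ℝ | ∃ γ' : Fin p → ℝ, N γ' ≤ ηγ ∧ r = Jobj n p X y lam β γ'}) ≥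
      (ηγ / N γ) * Jobj n p X y lam β₀ γ
        - lam * ηγ * (N γ - ηγ) * (∑ j, γ j ^ 2) / (N γ) ^ 2 := by
  have hNγ : 0 < N γ := hηγ.trans_le hγ
  let q : Seminorm ℝ (Fin p → ℝ) := .of N hN_add fun c x => by rw [hN_smul, Real.norm_eq_abs]
  have hD : IsCompact (q.closedBall 0 ηγ) :=
    q.isCompact_closedBall_zero (fun x => (hN_eq_zero x).mp) ηγ
  have hbdd (β : Fin p → ℝ) : BddAbove {r | ∃ γ', N γ' ≤ ηγ ∧ r = Jobj n p X y lam β γ'} := by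
    refine (hD.image (continuous_Jobj_right X y lam β)).bddAbove.mono ?_
    rintro _ ⟨γ', hγ', rfl⟩
    exact ⟨γ', q.mem_closedBall_zero.mpr hγ', rfl⟩
  set t := ηγ / N γ
  have ht₀ : 0 ≤ t := by positivity
  have ht : t ≤ 1 := (div_le_one hNγ).mpr hγ
  have htγ : N (t • γ) = ηγ := by rw [hN_smul, abs_of_nonneg ht₀, div_mul_cancel₀ _ hNγ.ne']
  refine le_ciInf fun β => le_csSup_of_le (hbdd β) ⟨t • γ, htγ.le, rfl⟩ ?_
  calc t * Jobj n p X y lam β₀ γ - lam * ηγ * (N γ - ηγ) * (∑ j, γ j ^ 2) / N γ ^ 2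
      = t * Jobj n p X y lam β₀ γ - lam * t * (1 - t) * ∑ j, γ j ^ 2 := by
        simp only [t]
        field_simp
    _ ≤ t * Jobj n p X y lam β γ - lam * t * (1 - t) * ∑ j, γ j ^ 2 := by
        gcongr
        exact hβ₀ β
    _ ≤ Jobj n p X y lam β (t • γ) := mul_Jobj_sub_le_Jobj_smul X y hlam.le ht β γ

/-- For any norm `N`, `η_γ > 0`, any `γ` with `N(γ) ≥ η_γ` and any
minimizer `β₀` of `β ↦ J_λ(β, γ)`:
`inf_β sup_{γ' ∈ D_γ} J_λ(β, γ') ≥ (η_γ/N(γ)) J_λ(β₀, γ) − λη_γ(N(γ) − η_γ)‖γ‖²/N(γ)²`. -/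
theorem optimality_gap_bound (n p : ℕ) (X : Matrix (Fin n) (Fin p) ℝ)
    (y : Fin n → ℝ) (lam : ℝ) (hlam : 0 < lam)
    (N : (Fin p → ℝ) → ℝ)
    (hN_nonneg : ∀ x, 0 ≤ N x)
    (hN_eq_zero : ∀ x, N x = 0 ↔ x = 0)
    (hN_smul : ∀ (c : ℝ) (x : Fin p → ℝ), N (c • x) = |c| * N x)
    (hN_add : ∀ x z : Fin p → ℝ, N (x + z) ≤ N x + N z)
    (ηγ : ℝ) (hηγ : 0 < ηγ)
    (γ : Fin p → ℝ) (hγ : ηγ ≤ N γ)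
    (β₀ : Fin p → ℝ) (hβ₀ : ∀ β, Jobj n p X y lam β₀ γ ≤ Jobj n p X y lam β γ) :
    (⨅ β : Fin p → ℝ,
        sSup {r : ℝ | ∃ γ' : Fin p → ℝ, N γ' ≤ ηγ ∧ r = Jobj n p X y lam β γ'}) ≥
      (ηγ / N γ) * Jobj n p X y lam β₀ γ
        - lam * ηγ * (N γ - ηγ) * (∑ j, γ j ^ 2) / (N γ) ^ 2 :=
  optimality_gap_bound_general n p X y lam hlam N hN_eq_zero hN_smul hN_add ηγ hηγ γ hγ β₀ hβ₀
end
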